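/- arXiv:2508.15567 — 2 statements merged into one kernel-verified Lean document; each statement's English description precedes it below -/
import Mathlib

section
/- Let y₁, y₂, y₃ ∈ ℝⁿ, set y = y₁ + y₂, ŷ = H y, ŷ* = H₁ y₁ + H₂ y₂, ŷ₃ = H₃ y₃, and define R := (y₃ − ŷ₃)ᵀ((y − ŷ) − (y − ŷ*)). If R ≤ 0, then ‖(y + y₃) − (ŷ + ŷ₃)‖² ≤ ‖(y + y₃) − (ŷ* + ŷ₃)‖². -/
open Matrix MeasureTheory ProbabilityTheory
open scoped BigOperators

/-- The hat matrix `H_A = A (AᵀA)⁻¹ Aᵀ` of a design matrix `A`. -/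
noncomputable def hatMat {n : ℕ} {q : Type*} [Fintype q] [DecidableEq q]
    (A : Matrix (Fin n) q ℝ) : Matrix (Fin n) (Fin n) ℝ :=
  A * (Aᵀ * A)⁻¹ * Aᵀ

/-! `H` is the orthogonal projection onto a subspace containing `ŷ*`. Hence the residual
`y - ŷ` is orthogonal to `d := ŷ - ŷ*`, and with `r := y₃ - ŷ₃`,
`‖(y - ŷ*) + r‖² = ‖(y - ŷ) + r‖² + ‖d‖² + 2 r ⬝ d`, where `r ⬝ d = -R ≥ 0`. -/

section HatMatrix

variable {n : ℕ} {q : Type*} [Fintype q] [DecidableEq q]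

lemma hatMat_transpose (A : Matrix (Fin n) q ℝ) : (hatMat A)ᵀ = hatMat A := by
  rw [hatMat, transpose_mul, transpose_mul, transpose_transpose, transpose_nonsing_inv,
    transpose_mul, transpose_transpose, Matrix.mul_assoc]

lemma hatMat_mul_cancel {A : Matrix (Fin n) q ℝ} (h : IsUnit (Aᵀ * A)) : hatMat A * A = A := by
  rw [hatMat, Matrix.mul_assoc, Matrix.mul_assoc,
    nonsing_inv_mul _ ((isUnit_iff_isUnit_det _).mp h), Matrix.mul_one]

lemma mul_hatMat_of_mul_eq {P : Matrix (Fin n) (Fin n) ℝ} {A : Matrix (Fin n) q ℝ}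
    (h : P * A = A) : P * hatMat A = hatMat A := by
  rw [hatMat, ← Matrix.mul_assoc, ← Matrix.mul_assoc, h]

lemma isIdempotentElem_hatMat {A : Matrix (Fin n) q ℝ} (h : IsUnit (Aᵀ * A)) :
    IsIdempotentElem (hatMat A) :=
  mul_hatMat_of_mul_eq (hatMat_mul_cancel h)

variable {q₁ q₂ : Type*} [Fintype q₁] [DecidableEq q₁] [Fintype q₂] [DecidableEq q₂]

lemma hatMat_fromCols_mul_left_and_right {A : Matrix (Fin n) q₁ ℝ} {B : Matrix (Fin n) q₂ ℝ}
    (h : IsUnit ((fromCols A B)ᵀ * fromCols A B)) :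
    hatMat (fromCols A B) * A = A ∧ hatMat (fromCols A B) * B = B := by
  apply fromCols_inj
  rw [← mul_fromCols, hatMat_mul_cancel h]

end HatMatrix

section Orthogonality

variable {ι : Type*} [Fintype ι]

lemma sub_mulVec_dotProduct_eq_zero {P : Matrix ι ι ℝ} (hPt : Pᵀ = P) (hP : IsIdempotentElem P)
    {w : ι → ℝ} (hw : P *ᵥ w = w) (v : ι → ℝ) : (v - P *ᵥ v) ⬝ᵥ w = 0 :=
  calc (v - P *ᵥ v) ⬝ᵥ w = (v - P *ᵥ v) ⬝ᵥ (P *ᵥ w) := by rw [hw]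
    _ = (Pᵀ *ᵥ (v - P *ᵥ v)) ⬝ᵥ w := by rw [dotProduct_mulVec, mulVec_transpose]
    _ = 0 := by rw [hPt, mulVec_sub, mulVec_mulVec, hP.eq, sub_self, zero_dotProduct]

lemma dotProduct_self_add_le_of_dotProduct_eq_zero {e d r : ι → ℝ} (hed : e ⬝ᵥ d = 0)
    (hrd : 0 ≤ r ⬝ᵥ d) : (e + r) ⬝ᵥ (e + r) ≤ (e + d + r) ⬝ᵥ (e + d + r) := by
  have hdd : 0 ≤ d ⬝ᵥ d := Finset.sum_nonneg fun i _ => mul_self_nonneg (d i)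
  simp only [add_dotProduct, dotProduct_add, dotProduct_comm d e, dotProduct_comm d r,
    dotProduct_comm r e]
  linarith

end Orthogonality

theorem avr_three_models_training_error_general {n p : ℕ}
    (X₁ X₂ X₃ : Matrix (Fin n) (Fin p) ℝ)
    (hX : IsUnit ((fromCols X₁ X₂)ᵀ * fromCols X₁ X₂))
    (y₁ y₂ y₃ : Fin n → ℝ) :
    let y := y₁ + y₂
    let H := hatMat (fromCols X₁ X₂)
    let H₁ := hatMat X₁
    let H₂ := hatMat X₂
    let H₃ := hatMat X₃
    let yhat := H.mulVec y
    let yhatStar := H₁.mulVec y₁ + H₂.mulVec y₂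
    let yhat₃ := H₃.mulVec y₃
    let R := (y₃ - yhat₃) ⬝ᵥ ((y - yhat) - (y - yhatStar))
    R ≤ 0 →
      ((y + y₃) - (yhat + yhat₃)) ⬝ᵥ ((y + y₃) - (yhat + yhat₃)) ≤
        ((y + y₃) - (yhatStar + yhat₃)) ⬝ᵥ ((y + y₃) - (yhatStar + yhat₃)) := by
  intro y H H₁ H₂ H₃ yhat yhatStar yhat₃ R hR
  have hH : IsIdempotentElem H := isIdempotentElem_hatMat hX
  have hfix : H *ᵥ yhatStar = yhatStar := by
    obtain ⟨hH₁, hH₂⟩ := hatMat_fromCols_mul_left_and_right hX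
    rw [mulVec_add, mulVec_mulVec, mulVec_mulVec, mul_hatMat_of_mul_eq hH₁,
      mul_hatMat_of_mul_eq hH₂]
  have horth : (y - yhat) ⬝ᵥ (yhat - yhatStar) = 0 := by
    refine sub_mulVec_dotProduct_eq_zero (hatMat_transpose _) hH ?_ y
    rw [mulVec_sub, mulVec_mulVec, hH.eq, hfix]
  have hR_eq : R = -((y₃ - yhat₃) ⬝ᵥ (yhat - yhatStar)) := by
    rw [← dotProduct_neg, neg_sub, ← sub_sub_sub_cancel_left yhat yhatStar y]
  have hres : (y + y₃) - (yhat + yhat₃) = (y - yhat) + (y₃ - yhat₃) := by abel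
  have hres' : (y + y₃) - (yhatStar + yhat₃) = (y - yhat) + (yhat - yhatStar) + (y₃ - yhat₃) := by
    abel
  rw [hres, hres']
  exact dotProduct_self_add_le_of_dotProduct_eq_zero horth (by linarith)

/-- **Lemma 1.** If `R := (y₃ − ŷ₃)ᵀ((y − ŷ) − (y − ŷ*)) ≤ 0`, then
`‖(y + y₃) − (ŷ + ŷ₃)‖² ≤ ‖(y + y₃) − (ŷ* + ŷ₃)‖²`. -/
theorem avr_three_models_training_error {n p : ℕ}
    (X₁ X₂ X₃ : Matrix (Fin n) (Fin p) ℝ)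
    (h₁ : IsUnit (X₁ᵀ * X₁)) (h₂ : IsUnit (X₂ᵀ * X₂)) (h₃ : IsUnit (X₃ᵀ * X₃))
    (hX : IsUnit ((fromCols X₁ X₂)ᵀ * fromCols X₁ X₂))
    (y₁ y₂ y₃ : Fin n → ℝ) :
    let y := y₁ + y₂
    let H := hatMat (fromCols X₁ X₂)
    let H₁ := hatMat X₁
    let H₂ := hatMat X₂
    let H₃ := hatMat X₃
    let yhat := H.mulVec y
    let yhatStar := H₁.mulVec y₁ + H₂.mulVec y₂
    let yhat₃ := H₃.mulVec y₃
    let R := (y₃ - yhat₃) ⬝ᵥ ((y - yhat) - (y - yhatStar))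
    R ≤ 0 →
      ((y + y₃) - (yhat + yhat₃)) ⬝ᵥ ((y + y₃) - (yhat + yhat₃)) ≤
        ((y + y₃) - (yhatStar + yhat₃)) ⬝ᵥ ((y + y₃) - (yhatStar + yhat₃)) :=
  avr_three_models_training_error_general X₁ X₂ X₃ hX y₁ y₂ y₃
end

section
/- For m = 1, 2, 3 let β_m, θ_m ∈ ℝᵖ and W_m be deterministic real n×p matrices; let (ε₁, ε₂, ε₃) and (η₁, η₂, η₃) be independent triples of square-integrable random vectors Ω → ℝⁿ, all with mean zero, and with E[ε_m ε_{m'}ᵀ] = Σ_{mm'}. Define training responses y_m = X_m β_m + W_m θ_m + ε_m, test responses z_m = X_m β_m + W_m θ_m + η_m, z = z₁ + z₂, and fitted values ŷ = H(y₁ + y₂), ŷ* = H₁ y₁ + H₂ y₂, ŷ₃ = H₃ y₃. Then E[‖(z + z₃) − (ŷ + ŷ₃)‖²] − E[‖(z + z₃) − (ŷ* + ŷ₃)‖²] = Tr{(H − H₁)Σ₁₁} + Tr{(H − H₂)Σ₂₂} + 2Tr{(H − H₂H₁)Σ₁₂} + 2Tr{H₃(H − H₁)Σ₁₃} + 2Tr{H₃(H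 − H₂)Σ₂₃} + ‖(I − H)W₁θ₁‖² − ‖(I − H₁)W₁θ₁‖² + ‖(I − H)W₂θ₂‖² − ‖(I − H₂)W₂θ₂‖² + 2(W₁θ₁)ᵀ(I − H)(W₂θ₂) − 2(W₁θ₁)ᵀ(I − H₁)(I − H₂)(W₂θ₂) + 2(W₃θ₃)ᵀ(I − H₃)(H₁ − H)(W₁θ₁) + 2(W₃θ₃)ᵀ(I − H₃)(H₂ − H)(W₂θ₂). -/
open Matrix MeasureTheory ProbabilityTheory
open scoped BigOperators

/-!
Both residual vectors `(z + z₃) - (ŷ + ŷ₃)` and `(z + z₃) - (ŷ* + ŷ₃)` have the form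
`a + (∑ η_m - ∑ M_m ε_m)`: the hat matrices fix the columns `X_m`, so the `X_m β_m` cancel, leaving
a deterministic bias `a` built from the `W_m θ_m`, with `M = (H, H, H₃)`, resp. `(H₁, H₂, H₃)`.
All noise has mean zero and `η` is independent of `ε`, so the cross terms vanish and each expected
squared error is `‖a‖² + E‖∑ η_m‖² + ∑_{m,m'} tr(M_mᵀ M_{m'} Σ_{m'm})`. The `η`-term cancels in the
difference; symmetry and idempotence of the hat matrices (and `Σ_{m'm} = Σ_{mm'}ᵀ`) reduce the
remaining bias and trace terms to the stated formula.
-/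

theorem mulVec_dotProduct_mulVec {ι κ : Type*} [Fintype ι] [Fintype κ] (A B : Matrix κ ι ℝ)
    (u v : ι → ℝ) : (A *ᵥ u) ⬝ᵥ (B *ᵥ v) = u ⬝ᵥ ((Aᵀ * B) *ᵥ v) := by
  rw [← vecMul_transpose, ← dotProduct_mulVec, mulVec_mulVec]

namespace hatMat

variable {n : ℕ} {q : Type*} [Fintype q] [DecidableEq q] {A : Matrix (Fin n) q ℝ}

theorem isSymm (A : Matrix (Fin n) q ℝ) : (hatMat A).IsSymm := by
  simp [Matrix.IsSymm, hatMat, transpose_mul, transpose_nonsing_inv, Matrix.mul_assoc]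

theorem mul_eq_of_isUnit (hA : IsUnit (Aᵀ * A)) : hatMat A * A = A := by
  rw [hatMat, Matrix.mul_assoc, Matrix.mul_assoc,
    nonsing_inv_mul _ ((isUnit_iff_isUnit_det _).mp hA), Matrix.mul_one]

theorem isIdempotentElem (hA : IsUnit (Aᵀ * A)) : IsIdempotentElem (hatMat A) := by
  calc hatMat A * hatMat A = hatMat A * A * (Aᵀ * A)⁻¹ * Aᵀ := by
        simp only [hatMat, Matrix.mul_assoc]
    _ = hatMat A := by rw [mul_eq_of_isUnit hA, hatMat]

theorem mulVec_mulVec_of_isUnit (hA : IsUnit (Aᵀ * A)) (v : q → ℝ) :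
    hatMat A *ᵥ (A *ᵥ v) = A *ᵥ v := by
  rw [mulVec_mulVec, mul_eq_of_isUnit hA]

variable {q' : Type*} [Fintype q'] [DecidableEq q'] {B : Matrix (Fin n) q' ℝ}

theorem fromCols_mul_left_and_right (h : IsUnit ((fromCols A B)ᵀ * fromCols A B)) :
    hatMat (fromCols A B) * A = A ∧ hatMat (fromCols A B) * B = B := by
  rw [← fromCols_ext_iff, ← mul_fromCols]
  exact mul_eq_of_isUnit h

theorem fromCols_mulVec_mulVec_left (h : IsUnit ((fromCols A B)ᵀ * fromCols A B)) (v : q → ℝ) :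
    hatMat (fromCols A B) *ᵥ (A *ᵥ v) = A *ᵥ v := by
  rw [mulVec_mulVec, (fromCols_mul_left_and_right h).1]

theorem fromCols_mulVec_mulVec_right (h : IsUnit ((fromCols A B)ᵀ * fromCols A B)) (v : q' → ℝ) :
    hatMat (fromCols A B) *ᵥ (B *ᵥ v) = B *ᵥ v := by
  rw [mulVec_mulVec, (fromCols_mul_left_and_right h).2]

end hatMat

section RandomVectors

variable {Ω : Type*} [MeasurableSpace Ω] {P : Measure Ω} {ι κ : Type*} [Fintype κ]

theorem memLp_mulVec_apply {p : ENNReal} {x : Ω → κ → ℝ} (hx : ∀ j, MemLp (fun ω => x ω j) p P)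
    (A : Matrix ι κ ℝ) (i : ι) : MemLp (fun ω => (A *ᵥ x ω) i) p P :=
  memLp_finsetSum _ fun j _ => (hx j).const_mul (A i j)

theorem integral_mulVec_apply {x : Ω → κ → ℝ} (hx : ∀ j, Integrable (fun ω => x ω j) P)
    (A : Matrix ι κ ℝ) (i : ι) :
    ∫ ω, (A *ᵥ x ω) i ∂P = (A *ᵥ fun j => ∫ ω, x ω j ∂P) i := by
  simp only [mulVec, dotProduct]
  rw [integral_finsetSum _ fun j _ => (hx j).const_mul _]
  simp_rw [integral_const_mul]

variable [Fintype ι]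

theorem integrable_dotProduct {x y : Ω → ι → ℝ} (hx : ∀ i, MemLp (fun ω => x ω i) 2 P)
    (hy : ∀ i, MemLp (fun ω => y ω i) 2 P) : Integrable (fun ω => x ω ⬝ᵥ y ω) P :=
  integrable_finsetSum _ fun i _ => (hx i).integrable_mul (hy i)

theorem integral_dotProduct_mulVec {x : Ω → ι → ℝ} {y : Ω → κ → ℝ}
    (hx : ∀ i, MemLp (fun ω => x ω i) 2 P) (hy : ∀ j, MemLp (fun ω => y ω j) 2 P)
    (A : Matrix ι κ ℝ) :
    ∫ ω, x ω ⬝ᵥ (A *ᵥ y ω) ∂P = trace (A * of fun j i => ∫ ω, y ω j * x ω i ∂P) := by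
  have hxy : ∀ i j, Integrable (fun ω => A i j * (y ω j * x ω i)) P := fun i j =>
    ((hy j).integrable_mul (hx i)).const_mul _
  have hpt : ∀ ω, x ω ⬝ᵥ (A *ᵥ y ω) = ∑ i, ∑ j, A i j * (y ω j * x ω i) := fun ω => by
    simp only [dotProduct, mulVec, Finset.mul_sum]
    exact Finset.sum_congr rfl fun i _ => Finset.sum_congr rfl fun j _ => by ring
  simp_rw [hpt]
  rw [integral_finsetSum _ fun i _ => integrable_finsetSum _ fun j _ => hxy i j]
  simp_rw [integral_finsetSum _ fun j _ => hxy _ j, integral_const_mul]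
  rfl

theorem integral_sum_dotProduct_sum {α β : Type*} [Fintype α] [Fintype β]
    {x : α → Ω → ι → ℝ} {y : β → Ω → ι → ℝ}
    (hx : ∀ a i, MemLp (fun ω => x a ω i) 2 P) (hy : ∀ b i, MemLp (fun ω => y b ω i) 2 P) :
    ∫ ω, (∑ a, x a ω) ⬝ᵥ (∑ b, y b ω) ∂P = ∑ a, ∑ b, ∫ ω, x a ω ⬝ᵥ y b ω ∂P := by
  simp_rw [sum_dotProduct, dotProduct_sum]
  rw [integral_finsetSum _ fun a _ => integrable_finsetSum _ fun b _ =>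
    integrable_dotProduct (hx a) (hy b)]
  simp_rw [integral_finsetSum _ fun b _ => integrable_dotProduct (hx _) (hy b)]

end RandomVectors

section SecondMoments

variable {Ω : Type*} [MeasurableSpace Ω] {P : Measure Ω} {ι : Type*} [Fintype ι]

theorem integral_const_add_dotProduct_self [IsProbabilityMeasure P] (a : ι → ℝ)
    {u : Ω → ι → ℝ} (hu : ∀ i, MemLp (fun ω => u ω i) 2 P) (hu0 : ∀ i, ∫ ω, u ω i ∂P = 0) :
    ∫ ω, (a + u ω) ⬝ᵥ (a + u ω) ∂P = a ⬝ᵥ a + ∫ ω, u ω ⬝ᵥ u ω ∂P := by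
  have hau : ∫ ω, a ⬝ᵥ u ω ∂P = 0 := by
    simp only [dotProduct]
    rw [integral_finsetSum _ fun i _ => ((hu i).integrable one_le_two).const_mul (a i)]
    simp [integral_const_mul, hu0]
  have hpt : ∀ ω, (a + u ω) ⬝ᵥ (a + u ω) = a ⬝ᵥ a + 2 * (a ⬝ᵥ u ω) + u ω ⬝ᵥ u ω := fun ω => by
    simp only [add_dotProduct, dotProduct_add, dotProduct_comm (u ω) a]
    ring
  have hau_int : Integrable (fun ω => a ⬝ᵥ u ω) P :=
    integrable_dotProduct (x := fun _ => a) (fun i => memLp_const (a i)) hu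
  simp_rw [hpt]
  rw [integral_add ((integrable_const _).fun_add (hau_int.const_mul 2))
      (integrable_dotProduct hu hu),
    integral_add (integrable_const _) (hau_int.const_mul 2), integral_const_mul, hau]
  simp

theorem integral_sub_dotProduct_self {s t : Ω → ι → ℝ} (hs : ∀ i, MemLp (fun ω => s ω i) 2 P)
    (ht : ∀ i, MemLp (fun ω => t ω i) 2 P) (hst : ∫ ω, s ω ⬝ᵥ t ω ∂P = 0) :
    ∫ ω, (s ω - t ω) ⬝ᵥ (s ω - t ω) ∂P = ∫ ω, s ω ⬝ᵥ s ω ∂P + ∫ ω, t ω ⬝ᵥ t ω ∂P := by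
  have hpt : ∀ ω, (s ω - t ω) ⬝ᵥ (s ω - t ω) = s ω ⬝ᵥ s ω - 2 * (s ω ⬝ᵥ t ω) + t ω ⬝ᵥ t ω :=
    fun ω => by
      simp only [sub_dotProduct, dotProduct_sub, dotProduct_comm (t ω) (s ω)]
      ring
  have hss_st : Integrable (fun ω => s ω ⬝ᵥ s ω - 2 * (s ω ⬝ᵥ t ω)) P :=
    (integrable_dotProduct hs hs).sub ((integrable_dotProduct hs ht).const_mul 2)
  simp_rw [hpt]
  rw [integral_add hss_st (integrable_dotProduct ht ht),
    integral_sub (integrable_dotProduct hs hs) ((integrable_dotProduct hs ht).const_mul 2),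
    integral_const_mul, hst]
  ring

end SecondMoments

section Noise

variable {Ω : Type*} [MeasurableSpace Ω] {P : Measure Ω} {ι κ τ : Type*}
  {ε : τ → Ω → ι → ℝ} {η : τ → Ω → κ → ℝ} {Sig : τ → τ → Matrix ι ι ℝ}

theorem integral_mul_eq_zero_of_indepFun
    (hind : IndepFun (fun ω m => ε m ω) (fun ω m => η m ω) P)
    (hε : ∀ m i, AEStronglyMeasurable (fun ω => ε m ω i) P)
    (hη : ∀ m i, AEStronglyMeasurable (fun ω => η m ω i) P)
    (hηmean : ∀ m i, ∫ ω, η m ω i ∂P = 0) (m m' : τ) (i : κ) (j : ι) :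
    ∫ ω, η m ω i * ε m' ω j ∂P = 0 := by
  have hind' : IndepFun (fun ω => η m ω i) (fun ω => ε m' ω j) P :=
    hind.symm.comp ((measurable_pi_apply i).comp (measurable_pi_apply m))
      ((measurable_pi_apply j).comp (measurable_pi_apply m'))
  rw [hind'.integral_fun_mul_eq_mul_integral (hη m i) (hε m' j), hηmean, zero_mul]

theorem transpose_eq_of_integral_mul_eq
    (hcov : ∀ m m' i j, ∫ ω, ε m ω i * ε m' ω j ∂P = Sig m m' i j) (m m' : τ) :
    (Sig m m')ᵀ = Sig m' m := by
  ext i j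
  rw [transpose_apply, ← hcov, ← hcov]
  simp_rw [mul_comm]

variable [Fintype ι] [Fintype κ] [Fintype τ]

theorem integral_sum_mulVec_dotProduct_self (hε : ∀ m i, MemLp (fun ω => ε m ω i) 2 P)
    (hcov : ∀ m m' i j, ∫ ω, ε m ω i * ε m' ω j ∂P = Sig m m' i j) (M : τ → Matrix κ ι ℝ) :
    ∫ ω, (∑ m, M m *ᵥ ε m ω) ⬝ᵥ (∑ m, M m *ᵥ ε m ω) ∂P
      = ∑ m, ∑ m', trace ((M m)ᵀ * M m' * Sig m' m) := by
  rw [integral_sum_dotProduct_sum (fun m => memLp_mulVec_apply (hε m) (M m))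
    (fun m => memLp_mulVec_apply (hε m) (M m))]
  refine Finset.sum_congr rfl fun m _ => Finset.sum_congr rfl fun m' _ => ?_
  simp_rw [mulVec_dotProduct_mulVec]
  rw [integral_dotProduct_mulVec (hε m) (hε m')]
  congr 2
  ext j i
  exact hcov m' m j i

theorem integral_sum_dotProduct_sum_mulVec_eq_zero (hε : ∀ m i, MemLp (fun ω => ε m ω i) 2 P)
    (hη : ∀ m i, MemLp (fun ω => η m ω i) 2 P)
    (hηε : ∀ m m' i j, ∫ ω, η m ω i * ε m' ω j ∂P = 0) (M : τ → Matrix κ ι ℝ) :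
    ∫ ω, (∑ m, η m ω) ⬝ᵥ (∑ m, M m *ᵥ ε m ω) ∂P = 0 := by
  rw [integral_sum_dotProduct_sum hη (fun m => memLp_mulVec_apply (hε m) (M m))]
  refine Finset.sum_eq_zero fun m _ => Finset.sum_eq_zero fun m' _ => ?_
  rw [integral_dotProduct_mulVec (hη m) (hε m')]
  have hcross : (of fun j i => ∫ ω, ε m' ω j * η m ω i ∂P) = 0 := by
    ext j i
    simp_rw [of_apply, mul_comm (ε m' _ j), hηε]
    rfl
  rw [hcross, Matrix.mul_zero, trace_zero]

theorem integral_residual_dotProduct_self [IsProbabilityMeasure P]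
    (hε : ∀ m i, MemLp (fun ω => ε m ω i) 2 P) (hη : ∀ m i, MemLp (fun ω => η m ω i) 2 P)
    (hεmean : ∀ m i, ∫ ω, ε m ω i ∂P = 0) (hηmean : ∀ m i, ∫ ω, η m ω i ∂P = 0)
    (hηε : ∀ m m' i j, ∫ ω, η m ω i * ε m' ω j ∂P = 0)
    (hcov : ∀ m m' i j, ∫ ω, ε m ω i * ε m' ω j ∂P = Sig m m' i j)
    (a : κ → ℝ) (M : τ → Matrix κ ι ℝ) :
    ∫ ω, (a + (∑ m, η m ω - ∑ m, M m *ᵥ ε m ω)) ⬝ᵥ (a + (∑ m, η m ω - ∑ m, M m *ᵥ ε m ω)) ∂P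
      = a ⬝ᵥ a + ∫ ω, (∑ m, η m ω) ⬝ᵥ (∑ m, η m ω) ∂P
        + ∑ m, ∑ m', trace ((M m)ᵀ * M m' * Sig m' m) := by
  have hs : ∀ i, MemLp (fun ω => (∑ m, η m ω) i) 2 P := fun i => by
    simpa only [Finset.sum_apply] using memLp_finsetSum _ fun m _ => hη m i
  have ht : ∀ i, MemLp (fun ω => (∑ m, M m *ᵥ ε m ω) i) 2 P := fun i => by
    simpa only [Finset.sum_apply] using
      memLp_finsetSum _ fun m _ => memLp_mulVec_apply (hε m) (M m) i
  have hmean : ∀ i, ∫ ω, (∑ m, η m ω - ∑ m, M m *ᵥ ε m ω) i ∂P = 0 := fun i => by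
    simp only [Pi.sub_apply]
    rw [integral_sub ((hs i).integrable one_le_two) ((ht i).integrable one_le_two)]
    simp only [Finset.sum_apply]
    rw [integral_finsetSum _ fun m _ => (hη m i).integrable one_le_two,
      integral_finsetSum _ fun m _ => (memLp_mulVec_apply (hε m) (M m) i).integrable one_le_two]
    simp [integral_mulVec_apply fun j => (hε _ j).integrable one_le_two, hεmean, hηmean,
      ← Pi.zero_def]
  rw [integral_const_add_dotProduct_self (u := fun ω => ∑ m, η m ω - ∑ m, M m *ᵥ ε m ω) a
      (fun i => (hs i).sub (ht i)) hmean,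
    integral_sub_dotProduct_self hs ht (integral_sum_dotProduct_sum_mulVec_eq_zero hε hη hηε M),
    integral_sum_mulVec_dotProduct_self hε hcov M, add_assoc]

end Noise

section ProjectionAlgebra

variable {ι : Type*} [Fintype ι]

theorem add_add_dotProduct_self (x y z : ι → ℝ) :
    (x + y + z) ⬝ᵥ (x + y + z)
      = x ⬝ᵥ x + y ⬝ᵥ y + z ⬝ᵥ z + 2 * (x ⬝ᵥ y) + 2 * (z ⬝ᵥ x) + 2 * (z ⬝ᵥ y) := by
  simp only [add_dotProduct, dotProduct_add]
  rw [dotProduct_comm y x, dotProduct_comm x z, dotProduct_comm y z]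
  ring

theorem bias_difference {Q Q₁ Q₂ Q₃ : Matrix ι ι ℝ} (hQ : Q.IsSymm) (hQQ : IsIdempotentElem Q)
    (hQ₁ : Q₁.IsSymm) (hQ₃ : Q₃.IsSymm) (w₀ w₁ w₂ : ι → ℝ) :
    (Q *ᵥ (w₀ + w₁) + Q₃ *ᵥ w₂) ⬝ᵥ (Q *ᵥ (w₀ + w₁) + Q₃ *ᵥ w₂)
        - (Q₁ *ᵥ w₀ + Q₂ *ᵥ w₁ + Q₃ *ᵥ w₂) ⬝ᵥ (Q₁ *ᵥ w₀ + Q₂ *ᵥ w₁ + Q₃ *ᵥ w₂)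
      = (Q *ᵥ w₀) ⬝ᵥ (Q *ᵥ w₀) - (Q₁ *ᵥ w₀) ⬝ᵥ (Q₁ *ᵥ w₀)
        + (Q *ᵥ w₁) ⬝ᵥ (Q *ᵥ w₁) - (Q₂ *ᵥ w₁) ⬝ᵥ (Q₂ *ᵥ w₁)
        + 2 * (w₀ ⬝ᵥ (Q *ᵥ w₁)) - 2 * (w₀ ⬝ᵥ ((Q₁ * Q₂) *ᵥ w₁))
        + 2 * (w₂ ⬝ᵥ ((Q₃ * (Q - Q₁)) *ᵥ w₀)) + 2 * (w₂ ⬝ᵥ ((Q₃ * (Q - Q₂)) *ᵥ w₁)) := by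
  rw [mulVec_add, add_add_dotProduct_self, add_add_dotProduct_self]
  simp only [mulVec_dotProduct_mulVec, hQ.eq, hQ₁.eq, hQ₃.eq, hQQ.eq, mul_sub, sub_mulVec,
    dotProduct_sub]
  ring

theorem variance_difference {H H₁ H₂ H₃ : Matrix ι ι ℝ} (hH : H.IsSymm) (hH₁ : H₁.IsSymm)
    (hH₂ : H₂.IsSymm) (hH₃ : H₃.IsSymm) (hHH : IsIdempotentElem H)
    (hH₁H₁ : IsIdempotentElem H₁) (hH₂H₂ : IsIdempotentElem H₂)
    {Sig : Fin 3 → Fin 3 → Matrix ι ι ℝ} (hSig : ∀ m m', (Sig m m')ᵀ = Sig m' m) :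
    ∑ m, ∑ m', trace ((![H, H, H₃] m)ᵀ * ![H, H, H₃] m' * Sig m' m)
        - ∑ m, ∑ m', trace ((![H₁, H₂, H₃] m)ᵀ * ![H₁, H₂, H₃] m' * Sig m' m)
      = trace ((H - H₁) * Sig 0 0) + trace ((H - H₂) * Sig 1 1)
        + 2 * trace ((H - H₂ * H₁) * Sig 0 1)
        + 2 * trace (H₃ * (H - H₁) * Sig 0 2)
        + 2 * trace (H₃ * (H - H₂) * Sig 1 2) := by
  have htr : ∀ (A : Matrix ι ι ℝ) m m', trace (A * Sig m' m) = trace (Aᵀ * Sig m m') :=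
    fun A m m' => by rw [← hSig, ← trace_transpose_mul, transpose_transpose]
  simp only [Fin.sum_univ_three, cons_val_zero, cons_val_one, cons_val_two, tail_cons,
    head_cons, htr _ 0 1, htr _ 0 2, htr _ 1 2]
  simp only [transpose_mul, hH.eq, hH₁.eq, hH₂.eq, hH₃.eq, hHH.eq, hH₁H₁.eq, hH₂H₂.eq, mul_sub,
    sub_mul, trace_sub]
  ring

end ProjectionAlgebra

/-- **Theorem 2, Eq. (testerror_noex)** (conditional-on-`W` identity): the difference of
expected test errors between AVR and IR, with deterministic `W_m`. -/
theorem test_error_difference_deterministic_W {n p : ℕ}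
    {Ω : Type*} [MeasurableSpace Ω] (P : Measure Ω) [IsProbabilityMeasure P]
    (X : Fin 3 → Matrix (Fin n) (Fin p) ℝ)
    (hXm : ∀ m, IsUnit ((X m)ᵀ * X m))
    (hX : IsUnit ((fromCols (X 0) (X 1))ᵀ * fromCols (X 0) (X 1)))
    (β θ : Fin 3 → Fin p → ℝ)
    (W : Fin 3 → Matrix (Fin n) (Fin p) ℝ)
    (ε η : Fin 3 → Ω → Fin n → ℝ)
    (Sig : Fin 3 → Fin 3 → Matrix (Fin n) (Fin n) ℝ)
    (hεL2 : ∀ m i, MemLp (fun ω => ε m ω i) 2 P)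
    (hηL2 : ∀ m i, MemLp (fun ω => η m ω i) 2 P)
    (hεmean : ∀ m i, ∫ ω, ε m ω i ∂P = 0)
    (hηmean : ∀ m i, ∫ ω, η m ω i ∂P = 0)
    (hεη : IndepFun (fun ω => fun m => ε m ω) (fun ω => fun m => η m ω) P)
    (hcov : ∀ m m' i j, ∫ ω, ε m ω i * ε m' ω j ∂P = Sig m m' i j) :
    let y : Fin 3 → Ω → Fin n → ℝ :=
      fun m ω => (X m).mulVec (β m) + (W m).mulVec (θ m) + ε m ω
    let z : Fin 3 → Ω → Fin n → ℝ :=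
      fun m ω => (X m).mulVec (β m) + (W m).mulVec (θ m) + η m ω
    let H := hatMat (fromCols (X 0) (X 1))
    let H₁ := hatMat (X 0)
    let H₂ := hatMat (X 1)
    let H₃ := hatMat (X 2)
    let yhat : Ω → Fin n → ℝ := fun ω => H.mulVec (y 0 ω + y 1 ω)
    let yhatStar : Ω → Fin n → ℝ := fun ω => H₁.mulVec (y 0 ω) + H₂.mulVec (y 1 ω)
    let yhat₃ : Ω → Fin n → ℝ := fun ω => H₃.mulVec (y 2 ω)
    let Wθ : Fin 3 → Fin n → ℝ := fun m => (W m).mulVec (θ m)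
    (∫ ω, ((z 0 ω + z 1 ω + z 2 ω) - (yhat ω + yhat₃ ω)) ⬝ᵥ
          ((z 0 ω + z 1 ω + z 2 ω) - (yhat ω + yhat₃ ω)) ∂P)
      - (∫ ω, ((z 0 ω + z 1 ω + z 2 ω) - (yhatStar ω + yhat₃ ω)) ⬝ᵥ
          ((z 0 ω + z 1 ω + z 2 ω) - (yhatStar ω + yhat₃ ω)) ∂P)
      = Matrix.trace ((H - H₁) * Sig 0 0) + Matrix.trace ((H - H₂) * Sig 1 1)
        + 2 * Matrix.trace ((H - H₂ * H₁) * Sig 0 1)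
        + 2 * Matrix.trace (H₃ * (H - H₁) * Sig 0 2)
        + 2 * Matrix.trace (H₃ * (H - H₂) * Sig 1 2)
        + ((1 - H).mulVec (Wθ 0)) ⬝ᵥ ((1 - H).mulVec (Wθ 0))
        - ((1 - H₁).mulVec (Wθ 0)) ⬝ᵥ ((1 - H₁).mulVec (Wθ 0))
        + ((1 - H).mulVec (Wθ 1)) ⬝ᵥ ((1 - H).mulVec (Wθ 1))
        - ((1 - H₂).mulVec (Wθ 1)) ⬝ᵥ ((1 - H₂).mulVec (Wθ 1))
        + 2 * ((Wθ 0) ⬝ᵥ ((1 - H).mulVec (Wθ 1)))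
        - 2 * ((Wθ 0) ⬝ᵥ (((1 - H₁) * (1 - H₂)).mulVec (Wθ 1)))
        + 2 * ((Wθ 2) ⬝ᵥ (((1 - H₃) * (H₁ - H)).mulVec (Wθ 0)))
        + 2 * ((Wθ 2) ⬝ᵥ (((1 - H₃) * (H₂ - H)).mulVec (Wθ 1))) := by
  intro y z H H₁ H₂ H₃ yhat yhatStar yhat₃ Wθ
  have hηε := integral_mul_eq_zero_of_indepFun hεη (fun m i => (hεL2 m i).aestronglyMeasurable)
    (fun m i => (hηL2 m i).aestronglyMeasurable) hηmean
  have hresA : ∀ ω, (z 0 ω + z 1 ω + z 2 ω) - (yhat ω + yhat₃ ω)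
      = ((1 - H) *ᵥ (Wθ 0 + Wθ 1) + (1 - H₃) *ᵥ Wθ 2)
        + (∑ m, η m ω - ∑ m, ![H, H, H₃] m *ᵥ ε m ω) := fun ω => by
    simp only [z, yhat, yhat₃, y, Wθ, H, H₃, Fin.sum_univ_three, cons_val_zero, cons_val_one,
      cons_val_two, tail_cons, head_cons, mulVec_add, sub_mulVec, one_mulVec,
      hatMat.fromCols_mulVec_mulVec_left hX, hatMat.fromCols_mulVec_mulVec_right hX,
      hatMat.mulVec_mulVec_of_isUnit (hXm 2)]
    abel
  have hresB : ∀ ω, (z 0 ω + z 1 ω + z 2 ω) - (yhatStar ω + yhat₃ ω)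
      = ((1 - H₁) *ᵥ Wθ 0 + (1 - H₂) *ᵥ Wθ 1 + (1 - H₃) *ᵥ Wθ 2)
        + (∑ m, η m ω - ∑ m, ![H₁, H₂, H₃] m *ᵥ ε m ω) := fun ω => by
    simp only [z, yhatStar, yhat₃, y, Wθ, H₁, H₂, H₃, Fin.sum_univ_three, cons_val_zero,
      cons_val_one, cons_val_two, tail_cons, head_cons, mulVec_add, sub_mulVec, one_mulVec,
      hatMat.mulVec_mulVec_of_isUnit (hXm 0), hatMat.mulVec_mulVec_of_isUnit (hXm 1),
      hatMat.mulVec_mulVec_of_isUnit (hXm 2)]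
    abel
  simp_rw [hresA, hresB]
  rw [integral_residual_dotProduct_self hεL2 hηL2 hεmean hηmean hηε hcov,
    integral_residual_dotProduct_self hεL2 hηL2 hεmean hηmean hηε hcov]
  have hbias := bias_difference (Q := 1 - H) (Q₁ := 1 - H₁) (Q₂ := 1 - H₂) (Q₃ := 1 - H₃)
    (isSymm_one.sub (hatMat.isSymm _))
    (hatMat.isIdempotentElem hX).one_sub (isSymm_one.sub (hatMat.isSymm _))
    (isSymm_one.sub (hatMat.isSymm _)) (Wθ 0) (Wθ 1) (Wθ 2)
  rw [sub_sub_sub_cancel_left, sub_sub_sub_cancel_left] at hbias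
  linear_combination hbias + variance_difference (H := H) (H₁ := H₁) (H₂ := H₂) (H₃ := H₃)
    (hatMat.isSymm _) (hatMat.isSymm _) (hatMat.isSymm _) (hatMat.isSymm _)
    (hatMat.isIdempotentElem hX)
    (hatMat.isIdempotentElem (hXm 0)) (hatMat.isIdempotentElem (hXm 1))
    (transpose_eq_of_integral_mul_eq hcov)
end
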